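/- arXiv:1903.08304 — 2 statements merged into one kernel-verified Lean document; each statement's English description precedes it below -/
import Mathlib

section
/- Let f ∈ 𝒮(ℝ) be a Schwartz function. Then for every x ∈ ℝ the limits C^±f(x) = lim_{ε↓0} Cf(x ± iε) exist, the principal-value limit Hf(x) = lim_{ε↓0} (1/π)∫_{|s−x|>ε} f(s)/(x−s) ds exists, and C^±f(x) = ±(1/2) f(x) + (i/2) Hf(x). In particular C^+f(x) − C^−f(x) = f(x) and C^+f(x) + C^−f(x) = i Hf(x) for every x ∈ ℝ. -/
open MeasureTheory Filter Topology Complex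

/-- The Cauchy transform `Cf(z) = (1/(2πi)) ∫_ℝ f(s)/(s-z) ds`. -/
noncomputable def cauchyE (f : ℝ → ℂ) (z : ℂ) : ℂ :=
  (2 * (Real.pi : ℂ) * Complex.I)⁻¹ * ∫ s : ℝ, f s / ((s : ℂ) - z)

/-!
Since `1 / (a ∓ iε) = (a ± iε) / (a² + ε²)`, the Cauchy integral `Cf(x ± iε)` splits into the
conjugate Poisson integral of `f` plus or minus `i` times its Poisson integral. The Poisson kernel
is an approximate identity, so the Poisson integral tends to `π f(x)`. Folding the line at `x`
turns both the conjugate Poisson integral and the truncated Hilbert integral into integrals over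
`t > 0` of the symmetric difference quotient `(f(x+t) - f(x-t)) / t`, which is integrable because
`f` is Lipschitz and integrable; by dominated convergence they converge to `A` and `-A`, where
`A = ∫₀^∞ (f(x+t) - f(x-t)) / t dt`. Hence `C^±f(x) = (A ± iπ f(x)) / (2πi)` and `Hf(x) = -A / π`.
-/

open Set

noncomputable def halfPlanePoissonKernel (ε a : ℝ) : ℝ := ε / (a ^ 2 + ε ^ 2)

noncomputable def halfPlaneConjPoissonKernel (ε a : ℝ) : ℝ := a / (a ^ 2 + ε ^ 2)

@[fun_prop]
lemma measurable_halfPlanePoissonKernel (ε : ℝ) : Measurable (halfPlanePoissonKernel ε) := by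
  unfold halfPlanePoissonKernel; fun_prop

@[fun_prop]
lemma measurable_halfPlaneConjPoissonKernel (ε : ℝ) :
    Measurable (halfPlaneConjPoissonKernel ε) := by
  unfold halfPlaneConjPoissonKernel; fun_prop

lemma abs_halfPlanePoissonKernel_le {ε : ℝ} (hε : ε ≠ 0) (a : ℝ) :
    |halfPlanePoissonKernel ε a| ≤ |ε|⁻¹ := by
  have hε' : 0 < |ε| := abs_pos.2 hε
  rw [halfPlanePoissonKernel, abs_div, abs_of_nonneg (by positivity : 0 ≤ a ^ 2 + ε ^ 2),
    div_le_iff₀ (by positivity), ← sq_abs ε]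
  field_simp
  nlinarith [sq_nonneg a]

lemma abs_halfPlaneConjPoissonKernel_le {ε : ℝ} (hε : ε ≠ 0) (a : ℝ) :
    |halfPlaneConjPoissonKernel ε a| ≤ |ε|⁻¹ := by
  have hε' : 0 < |ε| := abs_pos.2 hε
  rw [halfPlaneConjPoissonKernel, abs_div, abs_of_nonneg (by positivity : 0 ≤ a ^ 2 + ε ^ 2),
    div_le_iff₀ (by positivity), ← sq_abs ε, ← sq_abs a]
  field_simp
  nlinarith [sq_nonneg (|a| - |ε|)]

lemma halfPlanePoissonKernel_neg (ε a : ℝ) :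
    halfPlanePoissonKernel (-ε) a = -halfPlanePoissonKernel ε a := by
  simp [halfPlanePoissonKernel, neg_div]

lemma halfPlaneConjPoissonKernel_neg (ε a : ℝ) :
    halfPlaneConjPoissonKernel (-ε) a = halfPlaneConjPoissonKernel ε a := by
  simp [halfPlaneConjPoissonKernel]

lemma inv_ofReal_sub_mul_I {ε : ℝ} (hε : ε ≠ 0) (a : ℝ) :
    ((a : ℂ) - ε * I)⁻¹ = halfPlaneConjPoissonKernel ε a + I * halfPlanePoissonKernel ε a := by
  have hden : ((a ^ 2 + ε ^ 2 : ℝ) : ℂ) ≠ 0 := by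
    exact_mod_cast (by positivity : a ^ 2 + ε ^ 2 ≠ 0)
  rw [eq_comm]
  apply eq_inv_of_mul_eq_one_left
  simp only [halfPlaneConjPoissonKernel, halfPlanePoissonKernel]
  push_cast at hden ⊢
  field_simp
  ring_nf
  rw [I_sq]
  ring

lemma integral_eq_integral_Ioi_add_comp_sub {E : Type*} [NormedAddCommGroup E]
    [NormedSpace ℝ E] {h : ℝ → E} (hh : Integrable h) (x : ℝ) :
    ∫ s, h s = ∫ t in Ioi 0, (h (x + t) + h (x - t)) := by
  have hx : Integrable (fun t => h (x + t)) := hh.comp_add_left x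
  have hx' : Integrable (fun t => h (x - t)) := hh.comp_sub_left x
  rw [← integral_add_left_eq_self h x, integral_add hx.integrableOn hx'.integrableOn,
    ← intervalIntegral.integral_Iic_add_Ioi (b := 0) hx.integrableOn hx.integrableOn, add_comm,
    ← neg_zero, ← integral_comp_neg_Ioi]
  simp [sub_eq_add_neg]

lemma tendsto_setIntegral_Ioi_nhdsGT {E : Type*} [NormedAddCommGroup E] [NormedSpace ℝ E]
    {g : ℝ → E} {a : ℝ} (hg : IntegrableOn g (Ioi a)) :
    Tendsto (fun ε => ∫ t in Ioi ε, g t) (𝓝[>] a) (𝓝 (∫ t in Ioi a, g t)) := by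
  have hcover := aecover_Ioi_of_Ioi (μ := volume) (l := 𝓝[>] a) (a := id)
    (tendsto_id.mono_left nhdsWithin_le_nhds)
  refine (hcover.integral_tendsto_of_countably_generated hg).congr' ?_
  filter_upwards [self_mem_nhdsWithin] with ε (hε : a < ε)
  rw [Measure.restrict_restrict measurableSet_Ioi, id, Ioi_inter_Ioi, max_eq_left hε.le]

lemma integrableOn_Ioi_sub_div {f : ℝ → ℂ} (hf : Integrable f) {K : NNReal}
    (hK : LipschitzWith K f) (x : ℝ) :
    IntegrableOn (fun t : ℝ => (f (x + t) - f (x - t)) / t) (Ioi 0) := by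
  have hmeas : AEStronglyMeasurable (fun t : ℝ => (f (x + t) - f (x - t)) / t) := by
    have := hK.continuous.measurable
    exact (by fun_prop : Measurable fun t : ℝ => (f (x + t) - f (x - t)) / t)
      |>.aestronglyMeasurable
  rw [← Ioc_union_Ioi_eq_Ioi zero_le_one]
  refine IntegrableOn.union ?_ ?_
  · refine Measure.integrableOn_of_bounded (M := 2 * K) measure_Ioc_lt_top.ne hmeas ?_
    filter_upwards [ae_restrict_mem measurableSet_Ioc] with t ht
    replace ht := ht.1
    rw [norm_div, Complex.norm_real, Real.norm_eq_abs, abs_of_pos ht, div_le_iff₀ ht]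
    have := hK.dist_le_mul (x + t) (x - t)
    rw [dist_eq_norm, Real.dist_eq, show x + t - (x - t) = 2 * t by ring,
      abs_of_pos (by positivity)] at this
    linarith
  · refine Integrable.mono'
      ((hf.comp_add_left x).norm.add (hf.comp_sub_left x).norm).integrableOn hmeas.restrict ?_
    filter_upwards [ae_restrict_mem measurableSet_Ioi] with t (ht : 1 < t)
    rw [norm_div, Complex.norm_real, Real.norm_eq_abs, abs_of_pos (by linarith),
      div_le_iff₀ (by linarith)]
    calc ‖f (x + t) - f (x - t)‖ ≤ ‖f (x + t)‖ + ‖f (x - t)‖ := norm_sub_le _ _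
      _ ≤ _ := le_mul_of_one_le_right (by positivity) ht.le

lemma MeasureTheory.Integrable.mul_ofReal_comp_sub {f : ℝ → ℂ} (hf : Integrable f)
    {k : ℝ → ℝ} (hk : Measurable k) {C : ℝ} (hC : ∀ a, |k a| ≤ C) (x : ℝ) :
    Integrable (fun s => f s * k (s - x)) :=
  hf.mul_bdd (measurable_ofReal.comp (hk.comp (measurable_sub_const x))).aestronglyMeasurable
    (ae_of_all _ fun s => by simpa using hC (s - x))

lemma cauchyE_ofReal_add_mul_I {f : ℝ → ℂ} (hf : Integrable f) (x : ℝ) {ε : ℝ}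
    (hε : ε ≠ 0) :
    cauchyE f (x + ε * I) = (2 * Real.pi * I)⁻¹ *
      ((∫ s, f s * halfPlaneConjPoissonKernel ε (s - x)) +
        I * ∫ s, f s * halfPlanePoissonKernel ε (s - x)) := by
  have hsplit : ∀ s : ℝ, f s / (s - (x + ε * I)) =
      f s * halfPlaneConjPoissonKernel ε (s - x) +
        I * (f s * halfPlanePoissonKernel ε (s - x)) := fun s => by
    have hz : (s : ℂ) - (x + ε * I) = ((s - x : ℝ) : ℂ) - ε * I := by push_cast; ring
    rw [div_eq_mul_inv, hz, inv_ofReal_sub_mul_I hε]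
    ring
  rw [cauchyE, integral_congr_ae (ae_of_all _ hsplit),
    integral_add ((hf.mul_ofReal_comp_sub (measurable_halfPlaneConjPoissonKernel ε)
        (abs_halfPlaneConjPoissonKernel_le hε) x))
      ((hf.mul_ofReal_comp_sub (measurable_halfPlanePoissonKernel ε)
        (abs_halfPlanePoissonKernel_le hε) x).const_mul I),
    integral_const_mul]

lemma cauchyE_ofReal_sub_mul_I {f : ℝ → ℂ} (hf : Integrable f) (x : ℝ) {ε : ℝ}
    (hε : ε ≠ 0) :
    cauchyE f (x - ε * I) = (2 * Real.pi * I)⁻¹ *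
      ((∫ s, f s * halfPlaneConjPoissonKernel ε (s - x)) -
        I * ∫ s, f s * halfPlanePoissonKernel ε (s - x)) := by
  have h := cauchyE_ofReal_add_mul_I hf x (neg_ne_zero.2 hε)
  simp only [halfPlaneConjPoissonKernel_neg, halfPlanePoissonKernel_neg, ofReal_neg, neg_mul,
    mul_neg, integral_neg, ← sub_eq_add_neg] at h
  exact h

lemma tendsto_integral_mul_halfPlanePoissonKernel {f : ℝ → ℂ} (hf : Integrable f) {x : ℝ}
    (hfx : ContinuousAt f x) :
    Tendsto (fun ε => ∫ s, f s * halfPlanePoissonKernel ε (s - x)) (𝓝[>] 0)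
      (𝓝 (Real.pi * f x)) := by
  set φ : ℝ → ℝ := fun u => Real.pi⁻¹ * (1 + u ^ 2)⁻¹
  have hφ : ∀ u, 0 ≤ φ u := fun u => by positivity
  have hφ_int : ∫ u, φ u = 1 := by
    rw [integral_const_mul, integral_univ_inv_one_add_sq, inv_mul_cancel₀ Real.pi_ne_zero]
  have hφ_decay : Tendsto (fun u => ‖u‖ ^ Module.finrank ℝ ℝ * φ u) (Bornology.cobounded ℝ)
      (𝓝 0) := by
    refine squeeze_zero' (.of_forall fun u => by positivity) ?_
      (tendsto_inv_atTop_zero.comp tendsto_norm_cobounded_atTop)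
    filter_upwards [tendsto_norm_cobounded_atTop.eventually_gt_atTop 0] with u hu
    have hπ : 1 ≤ Real.pi := by linarith [Real.pi_gt_three]
    simp only [φ, Function.comp_apply, Module.finrank_self, pow_one, Real.norm_eq_abs] at hu ⊢
    rw [← sq_abs u]
    field_simp
    nlinarith [sq_nonneg |u|]
  have hpeak := (tendsto_integral_comp_smul_smul_of_integrable' hφ hφ_int hφ_decay hf hfx).comp
    tendsto_inv_nhdsGT_zero
  refine (hpeak.const_mul (Real.pi : ℂ)).congr' ?_
  filter_upwards [self_mem_nhdsWithin] with ε (hε : 0 < ε)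
  rw [Function.comp_apply, ← integral_const_mul]
  have hkernel : ∀ s, ε⁻¹ ^ Module.finrank ℝ ℝ * φ (ε⁻¹ • (x - s)) =
      Real.pi⁻¹ * halfPlanePoissonKernel ε (s - x) := fun s => by
    simp only [φ, halfPlanePoissonKernel, Module.finrank_self, pow_one, smul_eq_mul]
    field_simp
    ring
  congr 1 with s
  rw [hkernel, real_smul]
  push_cast
  field_simp

lemma setIntegral_abs_sub_gt_div_sub {f : ℝ → ℂ} (hf : Integrable f) (x : ℝ) {ε : ℝ}
    (hε : 0 < ε) :
    ∫ s in {s : ℝ | ε < |s - x|}, f s / (x - s) =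
      -∫ t in Ioi ε, (f (x + t) - f (x - t)) / t := by
  set S : Set ℝ := {s : ℝ | ε < |s - x|}
  have hS : MeasurableSet S := measurableSet_lt measurable_const (by fun_prop)
  have hint : IntegrableOn (fun s : ℝ => f s / (x - s)) S := by
    refine Integrable.mono' (hf.norm.const_mul ε⁻¹).integrableOn
      (hf.aestronglyMeasurable.mul
        (by fun_prop : Measurable fun s : ℝ => ((x : ℂ) - s)⁻¹).aestronglyMeasurable).restrict ?_
    filter_upwards [ae_restrict_mem hS] with s (hs : ε < |s - x|)
    rw [norm_div, ← ofReal_sub, norm_real, Real.norm_eq_abs, abs_sub_comm, div_eq_inv_mul]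
    exact mul_le_mul_of_nonneg_right (inv_anti₀ hε hs.le) (norm_nonneg _)
  have hfold : ∀ t ∈ Ioi (0 : ℝ), S.indicator (fun s => f s / (x - s)) (x + t) +
      S.indicator (fun s => f s / (x - s)) (x - t) =
      (Ioi ε).indicator (fun t : ℝ => -((f (x + t) - f (x - t)) / t)) t := by
    intro t (ht : 0 < t)
    have hmem : ∀ u, |u| = t → (x + u ∈ S ↔ t ∈ Ioi ε) := fun u hu => by
      simp [S, hu]
    rw [Set.indicator, Set.indicator, Set.indicator,
      if_congr (hmem t (abs_of_pos ht)) rfl rfl,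
      show x - t = x + -t by ring, if_congr (hmem (-t) (by rw [abs_neg, abs_of_pos ht])) rfl rfl]
    split_ifs
    · rw [show (x : ℂ) - ↑(x + t) = -t by push_cast; ring,
        show (x : ℂ) - ↑(x + -t) = t by push_cast; ring]
      ring
    · simp
  rw [← integral_indicator hS,
    integral_eq_integral_Ioi_add_comp_sub (hint.integrable_indicator hS) x,
    setIntegral_congr_fun measurableSet_Ioi hfold, setIntegral_indicator measurableSet_Ioi,
    Ioi_inter_Ioi, max_eq_right hε.le, integral_neg]

lemma tendsto_integral_mul_halfPlaneConjPoissonKernel {f : ℝ → ℂ} (hf : Integrable f)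
    {K : NNReal} (hK : LipschitzWith K f) (x : ℝ) :
    Tendsto (fun ε => ∫ s, f s * halfPlaneConjPoissonKernel ε (s - x)) (𝓝[>] 0)
      (𝓝 (∫ t in Ioi 0, (f (x + t) - f (x - t)) / t)) := by
  have hfold : ∀ ε : ℝ, ε ≠ 0 → ∫ s, f s * halfPlaneConjPoissonKernel ε (s - x) =
      ∫ t in Ioi 0, (f (x + t) - f (x - t)) * halfPlaneConjPoissonKernel ε t := fun ε hε => by
    rw [integral_eq_integral_Ioi_add_comp_sub (hf.mul_ofReal_comp_sub
      (measurable_halfPlaneConjPoissonKernel ε) (abs_halfPlaneConjPoissonKernel_le hε) x) x]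
    congr 1 with t
    simp only [add_sub_cancel_left, sub_sub_cancel_left, halfPlaneConjPoissonKernel, neg_sq,
      neg_div, ofReal_neg]
    ring
  have hfm := hK.continuous.measurable
  refine Tendsto.congr'
    (eventually_nhdsWithin_of_forall fun ε hε => (hfold ε (ne_of_gt hε)).symm) ?_
  refine tendsto_integral_filter_of_dominated_convergence
    (fun t => ‖(f (x + t) - f (x - t)) / t‖) ?_ ?_ (integrableOn_Ioi_sub_div hf hK x).norm ?_
  · exact .of_forall fun ε => by fun_prop
  · filter_upwards [self_mem_nhdsWithin] with ε (hε : 0 < ε)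
    filter_upwards [ae_restrict_mem measurableSet_Ioi] with t (ht : 0 < t)
    rw [norm_mul, norm_div, norm_real, norm_real, Real.norm_eq_abs, Real.norm_eq_abs,
      abs_of_pos ht, div_eq_mul_inv]
    gcongr
    rw [halfPlaneConjPoissonKernel, abs_of_nonneg (by positivity), div_le_iff₀ (by positivity)]
    field_simp
    nlinarith [sq_nonneg ε]
  · filter_upwards [ae_restrict_mem measurableSet_Ioi] with t (ht : 0 < t)
    have hkernel : Tendsto (fun ε => halfPlaneConjPoissonKernel ε t) (𝓝 0) (𝓝 t⁻¹) := by
      have : ContinuousAt (fun ε => halfPlaneConjPoissonKernel ε t) 0 := by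
        unfold halfPlaneConjPoissonKernel
        exact continuousAt_const.div (by fun_prop) (by positivity)
      simpa [halfPlaneConjPoissonKernel, sq, div_mul_cancel_left₀ ht.ne'] using this.tendsto
    simpa [div_eq_mul_inv] using
      ((continuous_ofReal.tendsto _).comp (hkernel.mono_left nhdsWithin_le_nhds)).const_mul
        (f (x + t) - f (x - t))

lemma SchwartzMap.exists_lipschitzWith {F : Type*} [NormedAddCommGroup F] [NormedSpace ℝ F]
    (f : SchwartzMap ℝ F) : ∃ K, LipschitzWith K f := by
  refine ⟨(SchwartzMap.seminorm ℝ 0 0 (SchwartzMap.derivCLM ℝ F f)).toNNReal,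
    lipschitzWith_of_nnnorm_deriv_le f.differentiable fun s => ?_⟩
  rw [← NNReal.coe_le_coe, coe_nnnorm, Real.coe_toNNReal _ (apply_nonneg _ _),
    ← SchwartzMap.derivCLM_apply ℝ]
  exact SchwartzMap.norm_le_seminorm ℝ _ s

/-- Plemelj formulas for Schwartz functions: the boundary values `C^±f(x)` and the
principal value Hilbert transform `Hf(x)` exist at every point, and
`C^±f = ±f/2 + (i/2) Hf`; in particular `C^+f - C^-f = f` and `C^+f + C^-f = iHf`. -/
theorem plemelj_schwartz (f : SchwartzMap ℝ ℂ) (x : ℝ) :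
    ∃ Cp Cm Hv : ℂ,
      Tendsto (fun ε : ℝ => cauchyE f ((x : ℂ) + ε * Complex.I)) (𝓝[>] 0) (𝓝 Cp) ∧
      Tendsto (fun ε : ℝ => cauchyE f ((x : ℂ) - ε * Complex.I)) (𝓝[>] 0) (𝓝 Cm) ∧
      Tendsto (fun ε : ℝ =>
          (Real.pi : ℂ)⁻¹ * ∫ s in {s : ℝ | ε < |s - x|}, f s / ((x : ℂ) - s))
        (𝓝[>] 0) (𝓝 Hv) ∧
      Cp = (1 / 2 : ℂ) * f x + (Complex.I / 2) * Hv ∧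
      Cm = -(1 / 2 : ℂ) * f x + (Complex.I / 2) * Hv ∧
      Cp - Cm = f x ∧ Cp + Cm = Complex.I * Hv := by
  obtain ⟨K, hK⟩ := f.exists_lipschitzWith
  set A := ∫ t in Ioi 0, (f (x + t) - f (x - t)) / t
  have hQ := tendsto_integral_mul_halfPlaneConjPoissonKernel f.integrable hK x
  have hP := tendsto_integral_mul_halfPlanePoissonKernel f.integrable
    (f.continuous.continuousAt (x := x))
  have hH := tendsto_setIntegral_Ioi_nhdsGT (integrableOn_Ioi_sub_div f.integrable hK x)
  have hpos : ∀ᶠ ε in 𝓝[>] (0 : ℝ), 0 < ε := self_mem_nhdsWithin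
  refine ⟨(2 * Real.pi * I)⁻¹ * (A + I * (Real.pi * f x)),
    (2 * Real.pi * I)⁻¹ * (A - I * (Real.pi * f x)), (Real.pi : ℂ)⁻¹ * -A, ?_, ?_, ?_, ?_⟩
  · refine ((hQ.add (hP.const_mul I)).const_mul _).congr' ?_
    filter_upwards [hpos] with ε hε
    rw [cauchyE_ofReal_add_mul_I f.integrable x hε.ne']
  · refine ((hQ.sub (hP.const_mul I)).const_mul _).congr' ?_
    filter_upwards [hpos] with ε hε
    rw [cauchyE_ofReal_sub_mul_I f.integrable x hε.ne']
  · refine (hH.neg.const_mul _).congr' ?_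
    filter_upwards [hpos] with ε hε
    rw [setIntegral_abs_sub_gt_div_sub f.integrable x hε]
  · refine ⟨?_, ?_, ?_, ?_⟩ <;> field_simp <;> ring_nf <;> simp only [I_sq] <;> ring
end

section
/- For every f ∈ L²(ℝ), the functions x ↦ Cf(x + iε) converge in L²(ℝ) as ε ↓ 0 to Ĉf := 𝓕^{−1}( 1_{(0,∞)} · 𝓕f ), where 𝓕 is the Fourier transform. Consequently C^+ extends to a bounded operator on L²(ℝ) that is an orthogonal projection (so ‖C^+‖_{L²→L²} = 1), similarly −C^− = 1 − C^+ is an orthogonal projection, and the Hilbert transform H = −i(C^+ + C^−) satisfies 𝓕(Hf)(ξ) = −i·sgn(ξ)·𝓕f(ξ) for a.e. ξ and every f ∈ L²(ℝ). -/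
open MeasureTheory Filter Topology Complex

/-!
By Fubini on the dense subspace `L¹ ∩ L²`, the inverse Fourier transform is the adjoint of the
Fourier transform, so `𝓕` is unitary. Hence `C⁺ = 𝓕⁻¹ 1_{(0,∞)} 𝓕` is a unitary conjugate of the
orthogonal projection "multiply by `1_{(0,∞)}`", and `C⁻ = C⁺ - 1` because
`-1_{(-∞,0)} = 1_{(0,∞)} - 1` almost everywhere.

For `Im z > 0` the Cauchy kernel is an inverse Fourier transform: `h(ξ) = 1_{(0,∞)}(ξ) e^{-i z̄ ξ}`
has `𝓕⁻¹h(s) = i / (√(2π) (s - z̄))`, so `Cf(z) = ⟪𝓕⁻¹h, f⟫ / √(2π) = ⟪h, 𝓕f⟫ / √(2π)`.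
For `z = x + iε` this reads `Cf(x + iε) = 𝓕⁻¹(1_{(0,∞)}(ξ) e^{-εξ} 𝓕f(ξ))(x)`, and dominated
convergence on the Fourier side gives `Cf(· + iε) → C⁺f` in `L²` as `ε ↓ 0`.
-/

open Set ComplexConjugate Function

namespace MeasureTheory.Lp

variable {α E : Type*} [MeasurableSpace α] {μ : Measure α} [NormedAddCommGroup E] {s : Set α}

theorem dense_setOf_integrable {p : ENNReal} [Fact (1 ≤ p)] (hp : p ≠ ⊤) :
    Dense {f : Lp E p μ | Integrable f μ} := by
  refine (simpleFunc.dense hp).mono fun f hf => ?_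
  have hfs : MemLp (simpleFunc.toSimpleFunc ⟨f, hf⟩) p μ := simpleFunc.memLp _
  exact ((SimpleFunc.memLp_iff_integrable (zero_lt_one.trans_le Fact.out).ne' hp).mp hfs).congr
    (simpleFunc.toSimpleFunc_eq_toFun ⟨f, hf⟩)

section indicator

variable {p : ENNReal} [Fact (1 ≤ p)] (𝕜 : Type*) [NormedField 𝕜] [NormedSpace 𝕜 E]

noncomputable def indicatorCLM (hs : MeasurableSet s) : Lp E p μ →L[𝕜] Lp E p μ :=
  LinearMap.mkContinuous
    { toFun := fun f => MemLp.toLp (s.indicator f) ((Lp.memLp f).indicator hs)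
      map_add' := fun f g => by
        rw [← MemLp.toLp_add]
        refine MemLp.toLp_congr _ _ ?_
        filter_upwards [Lp.coeFn_add f g] with x h
        by_cases hx : x ∈ s
        · simp only [Pi.add_apply, indicator_of_mem hx, h]
        · simp only [Pi.add_apply, indicator_of_notMem hx, add_zero]
      map_smul' := fun c f => by
        rw [RingHom.id_apply, ← MemLp.toLp_const_smul]
        refine MemLp.toLp_congr _ _ ?_
        filter_upwards [Lp.coeFn_smul c f] with x h
        by_cases hx : x ∈ s
        · simp only [Pi.smul_apply, indicator_of_mem hx, h]
        · simp only [Pi.smul_apply, indicator_of_notMem hx, smul_zero] }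
    1 fun f => by
      rw [one_mul, LinearMap.coe_mk, AddHom.coe_mk, Lp.norm_toLp, Lp.norm_def]
      exact ENNReal.toReal_mono (Lp.eLpNorm_ne_top f) (eLpNorm_indicator_le _)

variable {𝕜}

theorem coeFn_indicatorCLM (hs : MeasurableSet s) (f : Lp E p μ) :
    indicatorCLM 𝕜 hs f =ᵐ[μ] s.indicator f := by
  have : indicatorCLM 𝕜 hs f = MemLp.toLp (s.indicator f) ((Lp.memLp f).indicator hs) := rfl
  rw [this]
  exact MemLp.coeFn_toLp _

theorem indicatorCLM_ne_zero [Nontrivial E] (hs : MeasurableSet s) {t : Set α}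
    (ht : MeasurableSet t) (hts : t ⊆ s) (ht0 : μ t ≠ 0) (htop : μ t ≠ ⊤) :
    indicatorCLM 𝕜 hs ≠ (0 : Lp E p μ →L[𝕜] Lp E p μ) := by
  obtain ⟨c, hc⟩ := exists_ne (0 : E)
  intro h
  have hfix : indicatorCLM 𝕜 hs (indicatorConstLp p ht htop c) = indicatorConstLp p ht htop c := by
    refine Lp.ext ?_
    filter_upwards [coeFn_indicatorCLM (𝕜 := 𝕜) hs (indicatorConstLp p ht htop c),
      indicatorConstLp_coeFn (p := p) (hs := ht) (hμs := htop) (c := c)] with x h1 h2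
    rw [h1, h2]
    by_cases hx : x ∈ s
    · rw [indicator_of_mem hx, h2]
    · rw [indicator_of_notMem hx, indicator_of_notMem fun hxt => hx (hts hxt)]
  have hnorm := norm_indicatorConstLp' (p := p) (hs := ht) (hμs := htop) (c := c)
    (zero_lt_one.trans_le Fact.out).ne' ht0
  rw [← hfix, h, zero_apply, norm_zero] at hnorm
  have : 0 < μ.real t := ENNReal.toReal_pos ht0 htop
  have : 0 < ‖c‖ * μ.real t ^ (1 / p.toReal) := by positivity
  linarith

end indicator

variable {𝕜 : Type*} [RCLike 𝕜] [InnerProductSpace 𝕜 E] [CompleteSpace E]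

theorem isStarProjection_indicatorCLM (hs : MeasurableSet s) :
    IsStarProjection (indicatorCLM 𝕜 hs : Lp E 2 μ →L[𝕜] Lp E 2 μ) where
  isIdempotentElem := by
    ext1 f
    refine Lp.ext ?_
    filter_upwards [coeFn_indicatorCLM (𝕜 := 𝕜) hs (indicatorCLM 𝕜 hs f),
      coeFn_indicatorCLM (𝕜 := 𝕜) hs f] with x h1 h2
    rw [mul_apply_eq_comp, h1]
    by_cases hx : x ∈ s <;> simp [hx, h2]
  isSelfAdjoint := by
    refine ContinuousLinearMap.isSelfAdjoint_iff_isSymmetric.mpr fun f g => ?_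
    simp only [ContinuousLinearMap.coe_coe, L2.inner_def]
    refine integral_congr_ae ?_
    filter_upwards [coeFn_indicatorCLM (𝕜 := 𝕜) hs f, coeFn_indicatorCLM (𝕜 := 𝕜) hs g]
      with x h1 h2
    rw [h1, h2]
    by_cases hx : x ∈ s <;> simp [hx]

theorem eLpNorm_apply_of_mem_unitary {U : Lp E 2 μ →L[𝕜] Lp E 2 μ}
    (hU : U ∈ unitary (Lp E 2 μ →L[𝕜] Lp E 2 μ)) (g : Lp E 2 μ) :
    eLpNorm (U g) 2 μ = eLpNorm g 2 μ := by
  rw [← Lp.enorm_def, ← Lp.enorm_def, ← ofReal_norm, ← ofReal_norm,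
    ContinuousLinearMap.norm_map_of_mem_unitary hU]

end MeasureTheory.Lp

theorem MeasureTheory.MemLp.tendsto_eLpNorm_smul {α ι 𝕜 E : Type*} [MeasurableSpace α]
    {μ : Measure α} [NormedField 𝕜] [NormedAddCommGroup E] [NormedSpace 𝕜 E]
    {l : Filter ι} [l.IsCountablyGenerated] {p : ENNReal} (hp : p ≠ ⊤) {F : α → E}
    (hF : MemLp F p μ) {m : ι → α → 𝕜} {C : ℝ}
    (hm_meas : ∀ᶠ i in l, AEStronglyMeasurable (m i) μ) (hm_le : ∀ᶠ i in l, ∀ᵐ a ∂μ, ‖m i a‖ ≤ C)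
    (hm_lim : ∀ᵐ a ∂μ, Tendsto (fun i => m i a) l (𝓝 0)) :
    Tendsto (fun i => eLpNorm (fun a => m i a • F a) p μ) l (𝓝 0) := by
  rcases eq_or_ne p 0 with rfl | hp0
  · simpa using tendsto_const_nhds
  have hr : 0 < p.toReal := ENNReal.toReal_pos hp0 hp
  simp only [eLpNorm_eq_lintegral_rpow_enorm_toReal hp0 hp]
  have hbound : ∫⁻ a, ‖C * ‖F a‖‖ₑ ^ p.toReal ∂μ ≠ ⊤ :=
    (lintegral_rpow_enorm_lt_top_of_eLpNorm_lt_top hp0 hp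
      (hF.norm.const_mul C).eLpNorm_lt_top).ne
  have hint : Tendsto (fun i => ∫⁻ a, ‖m i a • F a‖ₑ ^ p.toReal ∂μ) l (𝓝 (∫⁻ _, 0 ∂μ)) := by
    refine tendsto_lintegral_filter_of_dominated_convergence' _ ?_ ?_ hbound ?_
    · filter_upwards [hm_meas] with i hi
      exact ((hi.smul hF.aestronglyMeasurable).enorm).pow_const _
    · filter_upwards [hm_le] with i hi
      filter_upwards [hi] with a ha
      refine ENNReal.rpow_le_rpow (enorm_le_iff_norm_le.mpr ?_) hr.le
      rw [norm_smul]
      exact (mul_le_mul_of_nonneg_right ha (norm_nonneg _)).trans (Real.le_norm_self _)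
    · filter_upwards [hm_lim] with a ha
      have : Tendsto (fun i => m i a • F a) l (𝓝 0) := by simpa using ha.smul_const (F a)
      simpa [ENNReal.zero_rpow_of_pos hr] using this.enorm.ennrpow_const p.toReal
  simpa [ENNReal.zero_rpow_of_pos (inv_pos.mpr hr)] using hint.ennrpow_const (1 / p.toReal)

theorem IsStarProjection.norm_eq_one {R : Type*} [NonUnitalNormedRing R] [StarRing R]
    [CStarRing R] {p : R} (hp : IsStarProjection p) (h0 : p ≠ 0) : ‖p‖ = 1 := by
  have hpos : 0 < ‖p‖ := norm_pos_iff.mpr h0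
  have : ‖p‖ ≤ ‖p‖ * ‖p‖ := by
    simpa only [hp.isIdempotentElem.eq] using norm_mul_le p p
  exact le_antisymm (hp.norm_le p) ((le_mul_iff_one_le_left hpos).mp this)

theorem IsStarProjection.star_mul_mul_of_mem_unitary {R : Type*} [Ring R] [StarRing R] {p u : R}
    (hp : IsStarProjection p) (hu : u ∈ unitary R) : IsStarProjection (star u * p * u) := by
  simpa using hp.map (Unitary.conjStarAlgAut ℕ R (star ⟨u, hu⟩))

local notation "L²" => Lp ℂ 2 (volume : Measure ℝ)

noncomputable def expIoi (a : ℂ) : ℝ → ℂ := (Ioi 0).indicator fun t : ℝ => cexp (a * t)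

theorem cexp_mul_expIoi (a b : ℂ) (t : ℝ) : cexp (b * t) * expIoi a t = expIoi (a + b) t := by
  by_cases ht : t ∈ Ioi 0
  · simp only [expIoi, indicator_of_mem ht, ← Complex.exp_add]
    ring_nf
  · simp only [expIoi, indicator_of_notMem ht, mul_zero]

theorem conj_expIoi (a : ℂ) (t : ℝ) : conj (expIoi a t) = expIoi (conj a) t := by
  by_cases ht : t ∈ Ioi 0
  · simp only [expIoi, indicator_of_mem ht, ← Complex.exp_conj, map_mul, Complex.conj_ofReal]
  · simp only [expIoi, indicator_of_notMem ht, map_zero]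

theorem expIoi_zero : expIoi 0 = (Ioi 0).indicator 1 := by
  simp [expIoi, Pi.one_def]

theorem norm_expIoi_le {a : ℂ} (ha : a.re ≤ 0) (t : ℝ) : ‖expIoi a t‖ ≤ 1 := by
  by_cases ht : t ∈ Ioi 0
  · simp only [expIoi, indicator_of_mem ht, Complex.norm_exp, Complex.re_mul_ofReal,
      Real.exp_le_one_iff]
    exact mul_nonpos_of_nonpos_of_nonneg ha (le_of_lt ht)
  · simp [expIoi, indicator_of_notMem ht]

theorem continuous_expIoi_apply (t : ℝ) : Continuous fun a => expIoi a t := by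
  by_cases ht : t ∈ Ioi 0
  · simp only [expIoi, indicator_of_mem ht]
    fun_prop
  · simp only [expIoi, indicator_of_notMem ht]
    exact continuous_const

theorem aestronglyMeasurable_expIoi (a : ℂ) : AEStronglyMeasurable (expIoi a) :=
  (Continuous.aestronglyMeasurable (by fun_prop)).indicator measurableSet_Ioi

theorem integrable_expIoi {a : ℂ} (ha : a.re < 0) : Integrable (expIoi a) :=
  (integrable_indicator_iff measurableSet_Ioi).mpr (integrableOn_exp_mul_complex_Ioi ha 0)

theorem memLp_expIoi {a : ℂ} (ha : a.re < 0) : MemLp (expIoi a) 2 := by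
  refine (memLp_two_iff_integrable_sq_norm (aestronglyMeasurable_expIoi a)).mpr ?_
  refine (integrable_expIoi ha).norm.mono' ((aestronglyMeasurable_expIoi a).norm.pow 2)
    (Eventually.of_forall fun t => ?_)
  have h := norm_expIoi_le ha.le t
  rw [Real.norm_of_nonneg (by positivity)]
  nlinarith [norm_nonneg (expIoi a t)]

theorem memLp_expIoi_mul {a : ℂ} (ha : a.re ≤ 0) (g : L²) :
    MemLp (fun ξ => expIoi a ξ * g ξ) 2 :=
  (Lp.memLp g).of_le ((aestronglyMeasurable_expIoi a).mul (Lp.memLp g).1)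
    (Eventually.of_forall fun ξ => by
      rw [norm_mul]
      exact mul_le_of_le_one_left (norm_nonneg _) (norm_expIoi_le ha ξ))

theorem integral_expIoi {a : ℂ} (ha : a.re < 0) : ∫ t, expIoi a t = -a⁻¹ := by
  rw [expIoi, integral_indicator measurableSet_Ioi, integral_exp_mul_complex_Ioi ha 0]
  simp [neg_div]

theorem inner_toLp_expIoi {a : ℂ} (ha : a.re < 0) (g : L²) :
    inner ℂ ((memLp_expIoi ha).toLp (expIoi a)) g = ∫ t, expIoi (conj a) t * g t := by
  rw [L2.inner_def]
  refine integral_congr_ae ?_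
  filter_upwards [(memLp_expIoi ha).coeFn_toLp] with t ht
  rw [RCLike.inner_apply, ht, conj_expIoi, mul_comm]

def IsKernelOperatorOnL1 (T : L² →L[ℂ] L²) (k : ℝ → ℝ → ℂ) : Prop :=
  ∀ (f : ℝ → ℂ) (_ : Integrable f (volume : Measure ℝ)) (hf2 : MemLp f 2 (volume : Measure ℝ)),
    (T (hf2.toLp f) : ℝ → ℂ) =ᵐ[volume]
      fun ξ : ℝ => (∫ t : ℝ, k ξ t * f t) / (Real.sqrt (2 * Real.pi) : ℂ)

namespace IsKernelOperatorOnL1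

variable {T S : L² →L[ℂ] L²} {k k' : ℝ → ℝ → ℂ}

theorem coeFn_apply (hT : IsKernelOperatorOnL1 T k) {u : L²} (hu : Integrable u) :
    T u =ᵐ[volume] fun ξ : ℝ => (∫ t : ℝ, k ξ t * u t) / (Real.sqrt (2 * Real.pi) : ℂ) := by
  simpa only [Lp.toLp_coeFn] using hT u hu (Lp.memLp u)

theorem inner_apply_of_integrable (hT : IsKernelOperatorOnL1 T k)
    (hS : IsKernelOperatorOnL1 S k') (hk' : Continuous (uncurry k'))
    (hk'_le : ∀ t ξ, ‖k' t ξ‖ ≤ 1) (hkk' : ∀ ξ t, conj (k ξ t) = k' t ξ)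
    {u v : L²} (hu : Integrable u) (hv : Integrable v) :
    inner ℂ (T u) v = inner ℂ u (S v) := by
  have hc : conj (Real.sqrt (2 * Real.pi) : ℂ) = Real.sqrt (2 * Real.pi) := Complex.conj_ofReal _
  have hint : Integrable (uncurry fun ξ t : ℝ => conj (u t) * (k' t ξ * v ξ))
      (volume.prod volume) := by
    refine (hv.norm.mul_prod hu.norm).mono' ?_ (Eventually.of_forall fun z => ?_)
    · exact (hu.aestronglyMeasurable.star.comp_snd).mul
        (((hk'.comp continuous_swap).aestronglyMeasurable).mul hv.aestronglyMeasurable.comp_fst)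
    · calc ‖conj (u z.2) * (k' z.2 z.1 * v z.1)‖ = ‖u z.2‖ * ‖k' z.2 z.1‖ * ‖v z.1‖ := by
            rw [norm_mul, norm_mul, Complex.norm_conj, mul_assoc]
        _ ≤ ‖u z.2‖ * 1 * ‖v z.1‖ := by gcongr; exact hk'_le _ _
        _ = ‖v z.1‖ * ‖u z.2‖ := by ring
  calc inner ℂ (T u) v
      = ∫ ξ, (∫ t, conj (u t) * (k' t ξ * v ξ)) / (Real.sqrt (2 * Real.pi) : ℂ) := by
        rw [L2.inner_def]
        refine integral_congr_ae ?_
        filter_upwards [hT.coeFn_apply hu] with ξ hξ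
        rw [RCLike.inner_apply, hξ, map_div₀, hc, ← integral_conj, mul_div_assoc',
          ← integral_const_mul]
        congr 2 with t
        rw [map_mul, hkk']
        ring
    _ = ∫ t, (∫ ξ, conj (u t) * (k' t ξ * v ξ)) / (Real.sqrt (2 * Real.pi) : ℂ) := by
        rw [integral_div, integral_div, integral_integral_swap hint]
    _ = inner ℂ u (S v) := by
        rw [L2.inner_def]
        refine integral_congr_ae ?_
        filter_upwards [hS.coeFn_apply hv] with t ht
        rw [RCLike.inner_apply, ht, integral_const_mul]
        ring

theorem eq_adjoint (hT : IsKernelOperatorOnL1 T k) (hS : IsKernelOperatorOnL1 S k')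
    (hk' : Continuous (uncurry k')) (hk'_le : ∀ t ξ, ‖k' t ξ‖ ≤ 1)
    (hkk' : ∀ ξ t, conj (k ξ t) = k' t ξ) :
    T = ContinuousLinearMap.adjoint S := by
  have hD : Dense {u : L² | Integrable u} := Lp.dense_setOf_integrable ENNReal.ofNat_ne_top
  have h := Continuous.ext_on (hD.prod hD) (f := fun w : L² × L² => inner ℂ (T w.1) w.2)
    (g := fun w => inner ℂ w.1 (S w.2)) (by fun_prop) (by fun_prop)
    fun w hw => hT.inner_apply_of_integrable hS hk' hk'_le hkk' hw.1 hw.2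
  exact (ContinuousLinearMap.eq_adjoint_iff T S).mpr fun u v => congrFun h (u, v)

theorem eq_adjoint_of_fourierKernel
    (hT : IsKernelOperatorOnL1 T fun x t => cexp (I * x * t))
    (hS : IsKernelOperatorOnL1 S fun ξ t => cexp (-(I * ξ * t))) :
    T = ContinuousLinearMap.adjoint S :=
  hT.eq_adjoint hS (by fun_prop) (fun t ξ => by simp [Complex.norm_exp]) fun ξ t => by
    rw [← Complex.exp_conj]
    simp only [map_mul, Complex.conj_I, Complex.conj_ofReal]
    ring_nf

theorem coeFn_toLp_expIoi (hT : IsKernelOperatorOnL1 T fun x t => cexp (I * x * t)) {a : ℂ}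
    (ha : a.re < 0) :
    T ((memLp_expIoi ha).toLp _) =ᵐ[volume]
      fun s : ℝ => -(a + I * s)⁻¹ / (Real.sqrt (2 * Real.pi) : ℂ) := by
  refine (hT _ (integrable_expIoi ha) (memLp_expIoi ha)).trans (Eventually.of_forall fun s => ?_)
  simp only [cexp_mul_expIoi]
  rw [integral_expIoi (by simpa using ha)]

theorem cauchyE_eq_inner (hT : IsKernelOperatorOnL1 T fun x t => cexp (I * x * t)) {z : ℂ}
    (hz : 0 < z.im) (f : L²) :
    cauchyE f z = inner ℂ (T ((memLp_expIoi (a := -I * conj z) (by simpa using hz)).toLp _)) f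
      / (Real.sqrt (2 * Real.pi) : ℂ) := by
  have hc : (Real.sqrt (2 * Real.pi) : ℂ) * Real.sqrt (2 * Real.pi) = 2 * Real.pi := by
    rw [← Complex.ofReal_mul, Real.mul_self_sqrt (by positivity)]
    push_cast
    ring
  have hc0 : (Real.sqrt (2 * Real.pi) : ℂ) ≠ 0 :=
    Complex.ofReal_ne_zero.mpr (Real.sqrt_pos.mpr (by positivity)).ne'
  calc cauchyE f z
      = (∫ s : ℝ, (I * Real.sqrt (2 * Real.pi))⁻¹ * (f s / (s - z))) /
          Real.sqrt (2 * Real.pi) := by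
        rw [cauchyE, integral_const_mul, ← hc]
        field_simp
    _ = _ := by
        rw [L2.inner_def]
        congr 1
        refine integral_congr_ae ?_
        filter_upwards [hT.coeFn_toLp_expIoi (a := -I * conj z) (by simpa using hz)] with s hs
        have key : conj (-I * conj z + I * s) = -(I * (s - z)) := by
          simp only [map_add, map_mul, map_neg, Complex.conj_I, Complex.conj_conj,
            Complex.conj_ofReal]
          ring
        rw [RCLike.inner_apply, hs, map_div₀, map_neg, map_inv₀, key, Complex.conj_ofReal,
          inv_neg, neg_neg, mul_inv I ((s : ℂ) - z)]
        ring

theorem cauchyE_add_mul_I_ae_eq (hT : IsKernelOperatorOnL1 T fun x t => cexp (I * x * t))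
    (hTS : T = ContinuousLinearMap.adjoint S) {ε : ℝ} (hε : 0 < ε) (f : L²) {G : L²}
    (hG : G =ᵐ[volume] fun ξ => expIoi (-ε) ξ * S f ξ) :
    (fun x : ℝ => cauchyE f (x + ε * I)) =ᵐ[volume] T G := by
  have hGi : Integrable G :=
    ((memLp_expIoi (by simpa using hε)).integrable_mul (Lp.memLp (S f))).congr hG.symm
  filter_upwards [hT.coeFn_apply hGi] with x hx
  rw [hx, hT.cauchyE_eq_inner (by simpa using hε) f, hTS,
    ContinuousLinearMap.adjoint_inner_left, inner_toLp_expIoi (by simpa using hε)]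
  congr 1
  refine integral_congr_ae ?_
  filter_upwards [hG] with t ht
  have ha : conj (-I * conj (x + ε * I)) = -ε + I * x := by
    simp only [map_neg, map_mul, Complex.conj_conj, Complex.conj_I]
    linear_combination ε * Complex.I_sq
  rw [ht, ← mul_assoc, cexp_mul_expIoi, ha]

end IsKernelOperatorOnL1

local notation "𝟙₊" => Lp.indicatorCLM ℂ (measurableSet_Ioi (a := (0 : ℝ)))

theorem coeFn_indicatorCLM_Ioi (g : L²) :
    𝟙₊ g =ᵐ[volume] fun ξ => if 0 < ξ then g ξ else 0 := by
  filter_upwards [Lp.coeFn_indicatorCLM (𝕜 := ℂ) (measurableSet_Ioi (a := (0 : ℝ))) g] with ξ h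
  simp [h, indicator_apply]

theorem coeFn_indicatorCLM_Ioi_sub_self (g : L²) :
    (𝟙₊ g - g : L²) =ᵐ[volume] fun ξ => if ξ < 0 then -g ξ else 0 := by
  have hne : ∀ᵐ ξ : ℝ, ξ ≠ 0 := by simp [ae_iff]
  filter_upwards [Lp.coeFn_sub (𝟙₊ g) g, coeFn_indicatorCLM_Ioi g, hne] with ξ h1 h2 hξ
  rw [h1, Pi.sub_apply, h2]
  rcases hξ.lt_or_gt with hξ | hξ <;> simp [hξ, hξ.not_gt]

theorem coeFn_two_smul_indicatorCLM_Ioi_sub_self (g : L²) :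
    ((2 : ℂ) • 𝟙₊ g - g : L²) =ᵐ[volume] fun ξ => (Real.sign ξ : ℂ) * g ξ := by
  have hne : ∀ᵐ ξ : ℝ, ξ ≠ 0 := by simp [ae_iff]
  filter_upwards [Lp.coeFn_sub ((2 : ℂ) • 𝟙₊ g) g, Lp.coeFn_smul (2 : ℂ) (𝟙₊ g),
    coeFn_indicatorCLM_Ioi g, hne] with ξ h1 h2 h3 hξ
  rw [h1, Pi.sub_apply, h2, Pi.smul_apply, h3]
  rcases hξ.lt_or_gt with hξ | hξ
  · simp [hξ.not_gt, Real.sign_of_neg hξ]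
  · simp [hξ, Real.sign_of_pos hξ]
    ring

theorem norm_indicatorCLM_Ioi : ‖(𝟙₊ : L² →L[ℂ] L²)‖ = 1 :=
  (Lp.isStarProjection_indicatorCLM _).norm_eq_one
    (Lp.indicatorCLM_ne_zero _ (t := Ioo 0 1) measurableSet_Ioo Ioo_subset_Ioi_self
      (by simp) (by simp))

theorem eLpNorm_cauchyE_sub_eq {T S : L² →L[ℂ] L²}
    (hT : IsKernelOperatorOnL1 T fun x t => cexp (I * x * t))
    (hTS : T = ContinuousLinearMap.adjoint S) (hS : S ∈ unitary (L² →L[ℂ] L²)) {ε : ℝ}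
    (hε : 0 < ε) (f : L²) :
    eLpNorm (fun x : ℝ => cauchyE f (x + ε * I) - T (𝟙₊ (S f)) x) 2 volume =
      eLpNorm (fun ξ => (expIoi (-ε) ξ - expIoi 0 ξ) • S f ξ) 2 volume := by
  have hT_mem : T ∈ unitary (L² →L[ℂ] L²) := by
    rw [hTS, ← ContinuousLinearMap.star_eq_adjoint]
    exact Unitary.star_mem hS
  have hG := memLp_expIoi_mul (a := -ε) (by simpa using hε.le) (S f)
  set G := hG.toLp _
  calc _ = eLpNorm (T (G - 𝟙₊ (S f))) 2 volume := by
        refine eLpNorm_congr_ae ?_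
        filter_upwards [hT.cauchyE_add_mul_I_ae_eq hTS hε f hG.coeFn_toLp,
          Lp.coeFn_sub (T G) (T (𝟙₊ (S f)))] with x h1 h2
        rw [map_sub, h2, Pi.sub_apply, h1]
    _ = eLpNorm (G - 𝟙₊ (S f)) 2 volume := Lp.eLpNorm_apply_of_mem_unitary hT_mem _
    _ = _ := by
        refine eLpNorm_congr_ae ?_
        filter_upwards [Lp.coeFn_sub G (𝟙₊ (S f)), hG.coeFn_toLp,
          coeFn_indicatorCLM_Ioi (S f)] with ξ h1 h2 h3
        rw [h1, Pi.sub_apply, h2, h3, expIoi_zero, smul_eq_mul, sub_mul]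
        by_cases hξ : 0 < ξ <;> simp [hξ]

theorem tendsto_eLpNorm_cauchyE_sub {T S : L² →L[ℂ] L²}
    (hT : IsKernelOperatorOnL1 T fun x t => cexp (I * x * t))
    (hTS : T = ContinuousLinearMap.adjoint S) (hS : S ∈ unitary (L² →L[ℂ] L²)) (f : L²) :
    Tendsto (fun ε : ℝ => eLpNorm (fun x : ℝ => cauchyE f (x + ε * I) - T (𝟙₊ (S f)) x) 2 volume)
      (𝓝[>] 0) (𝓝 0) := by
  refine (tendsto_congr' (eventually_nhdsWithin_of_forall (s := Ioi 0) fun ε hε =>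
    (eLpNorm_cauchyE_sub_eq hT hTS hS hε f).symm)).mp ?_
  refine (Lp.memLp (S f)).tendsto_eLpNorm_smul ENNReal.ofNat_ne_top (C := 2)
    (Eventually.of_forall fun ε =>
      (aestronglyMeasurable_expIoi _).sub (aestronglyMeasurable_expIoi _))
    (eventually_nhdsWithin_of_forall (s := Ioi 0) fun ε hε => Eventually.of_forall fun ξ => ?_)
    (Eventually.of_forall fun ξ => ?_)
  · calc ‖expIoi (-ε) ξ - expIoi 0 ξ‖ ≤ 1 + 1 := (norm_sub_le _ _).trans
          (add_le_add (norm_expIoi_le (by simpa using le_of_lt hε) ξ) (norm_expIoi_le le_rfl ξ))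
      _ = 2 := by norm_num
  · have h := ((continuous_expIoi_apply ξ).comp continuous_ofReal.neg).tendsto 0
    simpa using (h.sub_const (expIoi 0 ξ)).mono_left nhdsWithin_le_nhds

theorem apply_neg_I_smul_ae_eq_sign_mul {U C : L² →L[ℂ] L²} (hU : U ∈ unitary (L² →L[ℂ] L²))
    (hC : C = star U * 𝟙₊ * U) (f : L²) :
    U ((-I) • (C f + (C - 1) f)) =ᵐ[volume] fun ξ => (-I) * (Real.sign ξ : ℂ) * U f ξ := by
  have hUU : ∀ g, U (star U g) = g := fun g => by
    simpa using congrArg (· g) (Unitary.mul_star_self_of_mem hU)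
  have h : U ((-I) • (C f + (C - 1) f)) = (-I) • ((2 : ℂ) • 𝟙₊ (U f) - U f) := by
    simp [hC, mul_apply_eq_comp, hUU]
    module
  rw [h]
  filter_upwards [Lp.coeFn_smul (-I) ((2 : ℂ) • 𝟙₊ (U f) - U f),
    coeFn_two_smul_indicatorCLM_Ioi_sub_self (U f)] with ξ h1 h2
  rw [h1, Pi.smul_apply, h2, smul_eq_mul, mul_assoc]

/-- Let `𝓕, 𝓕⁻¹` be the Fourier transform and its inverse on `L²(ℝ)` (characterized by
the usual integral formulas on `L¹ ∩ L²`), and let `C^+ f = 𝓕⁻¹(1_{(0,∞)} 𝓕 f)`,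
`C^- f = 𝓕⁻¹(-1_{(-∞,0)} 𝓕 f)`.  Then for every `f ∈ L²`, `Cf(· + iε) → C^+ f` in `L²`
as `ε ↓ 0`; `C^+` is an orthogonal projection of norm `1`, `-C^- = 1 - C^+` is an
orthogonal projection, and `H = -i(C^+ + C^-)` satisfies `𝓕(Hf) = -i sgn(·) 𝓕f`. -/
theorem cauchy_plus_L2
    (Four FourInv Cplus Cminus :
      Lp ℂ 2 (volume : Measure ℝ) →L[ℂ] Lp ℂ 2 (volume : Measure ℝ))
    (hFour : ∀ (f : ℝ → ℂ) (_ : Integrable f (volume : Measure ℝ))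
      (hf2 : MemLp f 2 (volume : Measure ℝ)),
      (Four (hf2.toLp f) : ℝ → ℂ) =ᵐ[volume]
        fun ξ : ℝ => (∫ t : ℝ, Complex.exp (-(Complex.I * ξ * t)) * f t) /
          (Real.sqrt (2 * Real.pi) : ℂ))
    (hFourInv : ∀ (f : ℝ → ℂ) (_ : Integrable f (volume : Measure ℝ))
      (hf2 : MemLp f 2 (volume : Measure ℝ)),
      (FourInv (hf2.toLp f) : ℝ → ℂ) =ᵐ[volume]
        fun x : ℝ => (∫ t : ℝ, Complex.exp (Complex.I * x * t) * f t) /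
          (Real.sqrt (2 * Real.pi) : ℂ))
    (hunit : ∀ f : Lp ℂ 2 (volume : Measure ℝ), FourInv (Four f) = f ∧ Four (FourInv f) = f)
    (hCp : ∀ f g : Lp ℂ 2 (volume : Measure ℝ),
      (g : ℝ → ℂ) =ᵐ[volume] (fun ξ : ℝ => if 0 < ξ then (Four f : ℝ → ℂ) ξ else 0) →
      Cplus f = FourInv g)
    (hCm : ∀ f g : Lp ℂ 2 (volume : Measure ℝ),
      (g : ℝ → ℂ) =ᵐ[volume] (fun ξ : ℝ => if ξ < 0 then -((Four f : ℝ → ℂ) ξ) else 0) →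
      Cminus f = FourInv g) :
    (∀ f : Lp ℂ 2 (volume : Measure ℝ),
      Tendsto (fun ε : ℝ =>
          eLpNorm (fun x : ℝ => cauchyE f ((x : ℂ) + ε * Complex.I) - (Cplus f : ℝ → ℂ) x)
            2 (volume : Measure ℝ))
        (𝓝[>] 0) (𝓝 0)) ∧
    ‖Cplus‖ = 1 ∧
    Cplus.comp Cplus = Cplus ∧
    (∀ f g : Lp ℂ 2 (volume : Measure ℝ),
      (inner ℂ (Cplus f) g : ℂ) = inner ℂ f (Cplus g)) ∧
    (1 : Lp ℂ 2 (volume : Measure ℝ) →L[ℂ] Lp ℂ 2 (volume : Measure ℝ)) - Cplus = -Cminus ∧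
    (-Cminus).comp (-Cminus) = -Cminus ∧
    (∀ f g : Lp ℂ 2 (volume : Measure ℝ),
      (inner ℂ ((-Cminus) f) g : ℂ) = inner ℂ f ((-Cminus) g)) ∧
    ∀ f : Lp ℂ 2 (volume : Measure ℝ),
      (Four ((-Complex.I) • (Cplus f + Cminus f)) : ℝ → ℂ) =ᵐ[volume]
        fun ξ : ℝ => (-Complex.I) * (Real.sign ξ : ℂ) * (Four f : ℝ → ℂ) ξ := by
  have hadj : FourInv = ContinuousLinearMap.adjoint Four :=
    IsKernelOperatorOnL1.eq_adjoint_of_fourierKernel hFourInv hFour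
  have hstar : star Four = FourInv := by rw [ContinuousLinearMap.star_eq_adjoint, hadj]
  have hU : Four ∈ unitary (L² →L[ℂ] L²) := by
    rw [Unitary.mem_iff, hstar]
    exact ⟨ContinuousLinearMap.ext fun f => (hunit f).1,
      ContinuousLinearMap.ext fun f => (hunit f).2⟩
  have hCplus : Cplus = star Four * 𝟙₊ * Four := by
    rw [hstar]
    ext1 f
    exact hCp f _ (coeFn_indicatorCLM_Ioi (Four f))
  have hCminus : Cminus = Cplus - 1 := by
    ext1 f
    rw [hCm f _ (coeFn_indicatorCLM_Ioi_sub_self (Four f)), map_sub, (hunit f).1, hCplus, hstar]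
    rfl
  have hproj : IsStarProjection Cplus :=
    hCplus ▸ (Lp.isStarProjection_indicatorCLM _).star_mul_mul_of_mem_unitary hU
  have hproj' : IsStarProjection (-Cminus) := by
    rw [hCminus, neg_sub]
    exact hproj.one_sub
  refine ⟨fun f => ?_, ?_, hproj.isIdempotentElem.eq, hproj.isSelfAdjoint.isSymmetric,
    by rw [hCminus, neg_sub], hproj'.isIdempotentElem.eq, hproj'.isSelfAdjoint.isSymmetric,
    fun f => ?_⟩
  · rw [hCplus, hstar]
    exact tendsto_eLpNorm_cauchyE_sub hFourInv hadj hU f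
  · rw [hCplus, CStarRing.norm_mul_mem_unitary _ hU,
      CStarRing.norm_mem_unitary_mul _ (Unitary.star_mem hU), norm_indicatorCLM_Ioi]
  · rw [hCminus]
    exact apply_neg_I_smul_ae_eq_sign_mul hU hCplus f
end
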